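/- arXiv:2101.00312 — 2 statements merged into one kernel-verified Lean document; each statement's English description precedes it below -/
import Mathlib

section
/- Let T and S be bounded linear operators on H admitting reduced A-adjoints T^♯ and S^♯. Then ‖T + S‖_A ≤ √( (1/2)·(‖T‖_A² + ‖S‖_A² + √((‖T‖_A² − ‖S‖_A²)² + 4‖TS^♯‖_A²)) + 2ω_A(S^♯T) ) ≤ ‖T‖_A + ‖S‖_A. -/
open ContinuousLinearMap

variable {H : Type*} [NormedAddCommGroup H] [InnerProductSpace ℂ H] [CompleteSpace H]

/-- The seminorm on `H` induced by a positive operator `A`: `‖x‖_A = √⟨Ax,x⟩`. -/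
noncomputable def vnA (A : H →L[ℂ] H) (x : H) : ℝ :=
  Real.sqrt (RCLike.re (inner ℂ (A x) x : ℂ))

/-- The `A`-seminorm of an operator: `‖X‖_A = sup {‖Xx‖_A : ‖x‖_A = 1}`. -/
noncomputable def opnA (A : H →L[ℂ] H) (X : H →L[ℂ] H) : ℝ :=
  sSup ((fun x => vnA A (X x)) '' {x : H | vnA A x = 1})

/-- The `A`-numerical radius: `ω_A(X) = sup {|⟨Xx,x⟩_A| : ‖x‖_A = 1}`. -/
noncomputable def wA (A : H →L[ℂ] H) (X : H →L[ℂ] H) : ℝ :=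
  sSup ((fun x => ‖(inner ℂ (A (X x)) x : ℂ)‖) '' {x : H | vnA A x = 1})

/-- `S` is the reduced `A`-adjoint of `T`: `A ∘ S = T* ∘ A` and
`range S ⊆ closure (range A)`. -/
def IsReducedAdjA (A T S : H →L[ℂ] H) : Prop :=
  A ∘L S = (ContinuousLinearMap.adjoint T) ∘L A ∧
    Set.range S ⊆ closure (Set.range (A : H → H))

/-- `X` is `A`-selfadjoint: `A ∘ X = X* ∘ A`. -/
def IsSelfAdjA (A X : H →L[ℂ] H) : Prop :=
  A ∘L X = (ContinuousLinearMap.adjoint X) ∘L A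

/-- `Re_A(T) = (T + T♯)/2`. -/
noncomputable def ReA (T Ts : H →L[ℂ] H) : H →L[ℂ] H := (2 : ℂ)⁻¹ • (T + Ts)

/-- `Im_A(T) = (T - T♯)/(2i)`. -/
noncomputable def ImA (T Ts : H →L[ℂ] H) : H →L[ℂ] H := (2 * Complex.I)⁻¹ • (T - Ts)

/-!
Factor `A = B† B` (e.g. `B = √A`), so that `‖x‖_A = ‖B x‖` and `⟨x, y⟩_A = ⟨B x, B y⟩`.
If `A Y = X* A`, then `X` is `A`-bounded: `‖X x‖²_A = ⟨x, Y X x⟩_A`, and for the `A`-selfadjoint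
`Z = Y X` iterating `‖Z x‖²_A ≤ ‖x‖_A ‖Z² x‖_A` along the powers `Z^(2^n)` gives
`‖Z x‖_A ≤ ‖Z‖ ‖x‖_A`.

For `‖x‖_A = 1` put `p = ‖T x‖_A`, `q = ‖S x‖_A`, so that
`‖(T + S) x‖²_A = p² + q² + 2 Re ⟨S♯T x, x⟩_A`. Moreover
`p² + q² = Re ⟨x, (T♯T + S♯S) x⟩_A ≤ ‖T♯T x + S♯S x‖_A`, whose square is at most
`a²p² + b²q² + 2cpq ≤ λ (p² + q²)`, where `a, b, c = ‖T‖_A, ‖S‖_A, ‖TS♯‖_A` and `λ` is the largest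
eigenvalue of `[[a², c], [c, b²]]`; hence `p² + q² ≤ λ`. The second inequality reduces to
`c, ω_A(S♯T) ≤ ab`.
-/

open Filter Topology RCLike
open scoped InnerProductSpace

lemma quadratic_form_le_max_eigenvalue (α β c p q : ℝ) :
    α * p ^ 2 + β * q ^ 2 + 2 * c * p * q ≤
      1 / 2 * (α + β + √((α - β) ^ 2 + 4 * c ^ 2)) * (p ^ 2 + q ^ 2) := by
  set s := √((α - β) ^ 2 + 4 * c ^ 2)
  have hs : s ^ 2 = (α - β) ^ 2 + 4 * c ^ 2 := Real.sq_sqrt (by positivity)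
  -- Cauchy–Schwarz for the vectors `(α - β, 2c)` and `(p² - q², 2pq)`
  have hCS : ((α - β) * (p ^ 2 - q ^ 2) + 2 * c * (2 * p * q)) ^ 2 ≤ (s * (p ^ 2 + q ^ 2)) ^ 2 := by
    rw [mul_pow, hs]
    nlinarith [sq_nonneg ((α - β) * (2 * p * q) - 2 * c * (p ^ 2 - q ^ 2))]
  nlinarith [(abs_le_of_sq_le_sq' hCS (by positivity)).2]

lemma sqrt_half_add_le_add {a b c w : ℝ} (ha : 0 ≤ a) (hb : 0 ≤ b) (hc : 0 ≤ c)
    (hcab : c ≤ a * b) (hw : w ≤ a * b) :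
    √(1 / 2 * (a ^ 2 + b ^ 2 + √((a ^ 2 - b ^ 2) ^ 2 + 4 * c ^ 2)) + 2 * w) ≤ a + b := by
  have hs : √((a ^ 2 - b ^ 2) ^ 2 + 4 * c ^ 2) ≤ a ^ 2 + b ^ 2 :=
    Real.sqrt_le_iff.2 ⟨by positivity, by nlinarith [mul_le_mul hcab hcab hc (by positivity)]⟩
  exact (Real.sqrt_le_left (by positivity)).2 (by nlinarith)

lemma le_of_forall_pow_two_pow_le {u K C : ℝ} (hK : 0 ≤ K)
    (h : ∀ n : ℕ, u ^ 2 ^ n ≤ C * K ^ 2 ^ n) : u ≤ K := by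
  by_contra! hKu
  have hu : 0 < u := hK.trans_lt hKu
  have hlim : Tendsto (fun n : ℕ => C * (K / u) ^ 2 ^ n) atTop (𝓝 0) := by
    simpa using ((tendsto_pow_atTop_nhds_zero_of_lt_one (div_nonneg hK hu.le)
      ((div_lt_one hu).2 hKu)).comp (tendsto_pow_atTop_atTop_of_one_lt one_lt_two)).const_mul C
  obtain ⟨n, hn⟩ := (hlim.eventually (gt_mem_nhds one_pos)).exists
  have : 1 ≤ C * (K / u) ^ 2 ^ n := by
    rw [div_pow, mul_div_assoc', le_div_iff₀ (by positivity), one_mul]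
    exact h n
  linarith

lemma norm_map_le_mul_of_forall_norm_eq_one {E F : Type*} [NormedAddCommGroup E] [NormedSpace ℂ E]
    [NormedAddCommGroup F] [NormedSpace ℂ F] {B : E →L[ℂ] F} {X : E →L[ℂ] E} {M : ℝ}
    (h0 : ∀ x, B x = 0 → B (X x) = 0) (h1 : ∀ x, ‖B x‖ = 1 → ‖B (X x)‖ ≤ M) (x : E) :
    ‖B (X x)‖ ≤ M * ‖B x‖ := by
  rcases eq_or_ne (B x) 0 with hx | hx
  · simp [h0 x hx, hx]
  · have := h1 ((‖B x‖⁻¹ : ℂ) • x) (by simp [norm_smul, hx])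
    rw [map_smul, map_smul, norm_smul, norm_inv, Complex.norm_real, norm_norm] at this
    rw [mul_comm]
    exact (inv_mul_le_iff₀ (norm_pos_iff.2 hx)).1 this

section SemiInner

variable {A B X Y Z : H →L[ℂ] H}

lemma exists_star_mul_self_eq_of_isPositive (hA : A.IsPositive) :
    ∃ B : H →L[ℂ] H, star B * B = A := by
  obtain ⟨B, hB⟩ := CStarAlgebra.nonneg_iff_eq_star_mul_self.1 ((nonneg_iff_isPositive A).2 hA)
  exact ⟨B, hB.symm⟩

lemma inner_apply_eq_inner_of_star_mul_self_eq (hBA : star B * B = A) (x y : H) :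
    ⟪A x, y⟫_ℂ = ⟪B x, B y⟫_ℂ := by
  rw [← hBA, mul_apply_eq_comp, star_eq_adjoint, adjoint_inner_left]

lemma vnA_eq_norm (hBA : star B * B = A) (x : H) : vnA A x = ‖B x‖ := by
  rw [vnA, inner_apply_eq_inner_of_star_mul_self_eq hBA, inner_self_eq_norm_sq,
    Real.sqrt_sq (norm_nonneg _)]

lemma mul_eq_star_mul_symm (hBA : star B * B = A) (h : A * Y = star X * A) :
    A * X = star Y * A := by
  have hA : star A = A := by rw [← hBA, star_mul, star_star]
  simpa [star_mul, hA] using (congrArg star h).symm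

lemma mul_mul_eq_star_mul_mul {X₁ X₂ Y₁ Y₂ : H →L[ℂ] H} (h₁ : A * Y₁ = star X₁ * A)
    (h₂ : A * Y₂ = star X₂ * A) : A * (Y₂ * Y₁) = star (X₁ * X₂) * A := by
  rw [← mul_assoc, h₂, mul_assoc, h₁, ← mul_assoc, star_mul]

lemma mul_pow_eq_star_pow_mul (hZ : A * Z = star Z * A) (n : ℕ) :
    A * Z ^ n = star (Z ^ n) * A := by
  induction n with
  | zero => simp
  | succ n ih =>
    have := mul_mul_eq_star_mul_mul hZ ih
    rwa [← pow_succ, ← pow_succ'] at this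

lemma inner_map_eq_inner_of_mul_eq_star_mul (hBA : star B * B = A) (h : A * Y = star X * A)
    (x z : H) : ⟪B (Y x), B z⟫_ℂ = ⟪B x, B (X z)⟫_ℂ := by
  have hY : A (Y x) = adjoint X (A x) := DFunLike.congr_fun h x
  rw [← inner_apply_eq_inner_of_star_mul_self_eq hBA,
    ← inner_apply_eq_inner_of_star_mul_self_eq hBA, hY, adjoint_inner_left]

lemma norm_map_sq_le_of_mul_eq_star_mul (hBA : star B * B = A) (h : A * Y = star X * A) (x : H) :
    ‖B (Y x)‖ ^ 2 ≤ ‖B x‖ * ‖B (X (Y x))‖ := by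
  rw [← inner_self_eq_norm_sq (𝕜 := ℂ), inner_map_eq_inner_of_mul_eq_star_mul hBA h]
  exact (re_le_norm _).trans (norm_inner_le_norm _ _)

lemma norm_map_le_opNorm_mul_of_mul_eq_star_mul_self (hBA : star B * B = A)
    (hZ : A * Z = star Z * A) (x : H) : ‖B (Z x)‖ ≤ ‖Z‖ * ‖B x‖ := by
  refine norm_map_le_mul_of_forall_norm_eq_one (fun x hx => ?_) (fun x hx => ?_) x
  · have := norm_map_sq_le_of_mul_eq_star_mul hBA hZ x
    rw [hx, norm_zero, zero_mul] at this
    exact norm_eq_zero.1 (pow_eq_zero_iff two_ne_zero |>.1 (le_antisymm this (by positivity)))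
  · have hpow : ∀ n : ℕ, ‖B (Z x)‖ ^ 2 ^ n ≤ ‖B ((Z ^ 2 ^ n) x)‖ := by
      intro n
      induction n with
      | zero => simp
      | succ n ih =>
        calc ‖B (Z x)‖ ^ 2 ^ (n + 1) = (‖B (Z x)‖ ^ 2 ^ n) ^ 2 := by rw [pow_succ, pow_mul]
          _ ≤ ‖B ((Z ^ 2 ^ n) x)‖ ^ 2 := by gcongr
          _ ≤ ‖B x‖ * ‖B ((Z ^ 2 ^ n) ((Z ^ 2 ^ n) x))‖ :=
            norm_map_sq_le_of_mul_eq_star_mul hBA (mul_pow_eq_star_pow_mul hZ _) x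
          _ = ‖B ((Z ^ 2 ^ (n + 1)) x)‖ := by rw [hx, one_mul, pow_succ, pow_mul, sq]; rfl
    refine le_of_forall_pow_two_pow_le (C := ‖B‖ * ‖x‖) (norm_nonneg Z) fun n => (hpow n).trans ?_
    calc ‖B ((Z ^ 2 ^ n) x)‖ ≤ ‖B‖ * (‖Z ^ 2 ^ n‖ * ‖x‖) := le_opNorm_of_le _ (le_opNorm _ _)
      _ ≤ ‖B‖ * (‖Z‖ ^ 2 ^ n * ‖x‖) := by gcongr; exact norm_pow_le' Z (by positivity)
      _ = ‖B‖ * ‖x‖ * ‖Z‖ ^ 2 ^ n := by ring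

lemma exists_bound_of_mul_eq_star_mul (hBA : star B * B = A) (h : A * Y = star X * A) :
    ∃ K, ∀ x, ‖B (X x)‖ ≤ K * ‖B x‖ := by
  have hX := mul_eq_star_mul_symm hBA h
  refine ⟨√‖Y * X‖, fun x => le_of_pow_le_pow_left₀ two_ne_zero (by positivity) ?_⟩
  calc ‖B (X x)‖ ^ 2 ≤ ‖B x‖ * ‖B ((Y * X) x)‖ := norm_map_sq_le_of_mul_eq_star_mul hBA hX x
    _ ≤ ‖B x‖ * (‖Y * X‖ * ‖B x‖) := by
      gcongr
      exact norm_map_le_opNorm_mul_of_mul_eq_star_mul_self hBA (mul_mul_eq_star_mul_mul hX h) x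
    _ = (√‖Y * X‖ * ‖B x‖) ^ 2 := by rw [mul_pow, Real.sq_sqrt (norm_nonneg _)]; ring

lemma opnA_eq (hBA : star B * B = A) (X : H →L[ℂ] H) :
    opnA A X = sSup ((fun x => ‖B (X x)‖) '' {x | ‖B x‖ = 1}) := by
  simp only [opnA, vnA_eq_norm hBA]

omit [CompleteSpace H] in
lemma opnA_nonneg : 0 ≤ opnA A X :=
  Real.sSup_nonneg (by rintro _ ⟨x, -, rfl⟩; exact Real.sqrt_nonneg _)

lemma opnA_le (hBA : star B * B = A) {M : ℝ} (hM : 0 ≤ M)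
    (h : ∀ x, ‖B x‖ = 1 → ‖B (X x)‖ ≤ M) : opnA A X ≤ M := by
  rw [opnA_eq hBA]
  exact Real.sSup_le (by rintro _ ⟨x, hx, rfl⟩; exact h x hx) hM

lemma norm_map_le_opnA_mul (hBA : star B * B = A) (h : A * Y = star X * A) (x : H) :
    ‖B (X x)‖ ≤ opnA A X * ‖B x‖ := by
  obtain ⟨K, hK⟩ := exists_bound_of_mul_eq_star_mul hBA h
  refine norm_map_le_mul_of_forall_norm_eq_one (fun y hy => ?_) (fun y hy => ?_) x
  · simpa [hy] using hK y
  · rw [opnA_eq hBA]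
    refine le_csSup ⟨K, ?_⟩ ⟨y, hy, rfl⟩
    rintro _ ⟨z, hz, rfl⟩
    simpa [show ‖B z‖ = 1 from hz] using hK z

lemma norm_adjointA_map_le_opnA_mul (hBA : star B * B = A) (h : A * Y = star X * A)
    (x : H) : ‖B (Y x)‖ ≤ opnA A X * ‖B x‖ := by
  have hsq : ‖B (Y x)‖ ^ 2 ≤ opnA A X * ‖B x‖ * ‖B (Y x)‖ :=
    calc ‖B (Y x)‖ ^ 2 ≤ ‖B x‖ * ‖B (X (Y x))‖ := norm_map_sq_le_of_mul_eq_star_mul hBA h x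
      _ ≤ ‖B x‖ * (opnA A X * ‖B (Y x)‖) := by gcongr; exact norm_map_le_opnA_mul hBA h _
      _ = opnA A X * ‖B x‖ * ‖B (Y x)‖ := by ring
  nlinarith [norm_nonneg (B (Y x)), mul_nonneg (opnA_nonneg (A := A) (X := X)) (norm_nonneg (B x))]

lemma opnA_adjointA_le (hBA : star B * B = A) (h : A * Y = star X * A) :
    opnA A Y ≤ opnA A X :=
  opnA_le hBA opnA_nonneg fun x hx => by
    simpa [hx] using norm_adjointA_map_le_opnA_mul hBA h x

lemma opnA_comp_le {X' Y' : H →L[ℂ] H} (hBA : star B * B = A) (hX : A * X' = star X * A)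
    (hY : A * Y' = star Y * A) : opnA A (X ∘L Y) ≤ opnA A X * opnA A Y :=
  opnA_le hBA (mul_nonneg opnA_nonneg opnA_nonneg) fun x hx =>
    calc ‖B (X (Y x))‖ ≤ opnA A X * ‖B (Y x)‖ := norm_map_le_opnA_mul hBA hX _
      _ ≤ opnA A X * (opnA A Y * ‖B x‖) := by
        gcongr
        exacts [opnA_nonneg, norm_map_le_opnA_mul hBA hY _]
      _ = opnA A X * opnA A Y := by rw [hx, mul_one]

lemma norm_inner_le_opnA (hBA : star B * B = A) (h : A * Y = star X * A) {x : H}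
    (hx : ‖B x‖ = 1) : ‖⟪A (X x), x⟫_ℂ‖ ≤ opnA A X := by
  rw [inner_apply_eq_inner_of_star_mul_self_eq hBA]
  calc ‖⟪B (X x), B x⟫_ℂ‖ ≤ ‖B (X x)‖ * ‖B x‖ := norm_inner_le_norm _ _
    _ ≤ opnA A X * ‖B x‖ * ‖B x‖ := by gcongr; exact norm_map_le_opnA_mul hBA h x
    _ = opnA A X := by rw [hx, mul_one, mul_one]

lemma norm_inner_le_wA (hBA : star B * B = A) (h : A * Y = star X * A) {x : H}
    (hx : ‖B x‖ = 1) : ‖⟪A (X x), x⟫_ℂ‖ ≤ wA A X := by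
  refine le_csSup ⟨opnA A X, ?_⟩ ⟨x, (vnA_eq_norm hBA x).trans hx, rfl⟩
  rintro _ ⟨y, hy, rfl⟩
  exact norm_inner_le_opnA hBA h ((vnA_eq_norm hBA y).symm.trans hy)

lemma wA_le_opnA (hBA : star B * B = A) (h : A * Y = star X * A) : wA A X ≤ opnA A X := by
  refine Real.sSup_le ?_ opnA_nonneg
  rintro _ ⟨y, hy, rfl⟩
  exact norm_inner_le_opnA hBA h ((vnA_eq_norm hBA y).symm.trans hy)

end SemiInner

section Sum

variable {A B T S Ts Ss : H →L[ℂ] H}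

lemma norm_map_add_map_sq_le (hBA : star B * B = A) (hT : A * Ts = star T * A)
    (hS : A * Ss = star S * A) (x : H) :
    ‖B (Ts (T x) + Ss (S x))‖ ^ 2 ≤ opnA A T ^ 2 * ‖B (T x)‖ ^ 2 + opnA A S ^ 2 * ‖B (S x)‖ ^ 2
      + 2 * opnA A (T ∘L Ss) * ‖B (T x)‖ * ‖B (S x)‖ := by
  have hTSs : A * (S * Ts) = star (T * Ss) * A :=
    mul_mul_eq_star_mul_mul hT (mul_eq_star_mul_symm hBA hS)
  have hcross : re ⟪B (Ts (T x)), B (Ss (S x))⟫_ℂ ≤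
      opnA A (T ∘L Ss) * ‖B (T x)‖ * ‖B (S x)‖ := by
    rw [inner_map_eq_inner_of_mul_eq_star_mul hBA hT]
    calc re ⟪B (T x), B (T (Ss (S x)))⟫_ℂ ≤ ‖B (T x)‖ * ‖B ((T ∘L Ss) (S x))‖ :=
          (re_le_norm _).trans (norm_inner_le_norm _ _)
      _ ≤ ‖B (T x)‖ * (opnA A (T ∘L Ss) * ‖B (S x)‖) := by
          gcongr; exact norm_map_le_opnA_mul hBA hTSs _
      _ = opnA A (T ∘L Ss) * ‖B (T x)‖ * ‖B (S x)‖ := by ring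
  calc ‖B (Ts (T x) + Ss (S x))‖ ^ 2
      = ‖B (Ts (T x))‖ ^ 2 + 2 * re ⟪B (Ts (T x)), B (Ss (S x))⟫_ℂ + ‖B (Ss (S x))‖ ^ 2 := by
        rw [map_add, norm_add_sq (𝕜 := ℂ)]
    _ ≤ (opnA A T * ‖B (T x)‖) ^ 2 + 2 * (opnA A (T ∘L Ss) * ‖B (T x)‖ * ‖B (S x)‖)
        + (opnA A S * ‖B (S x)‖) ^ 2 := by
        gcongr
        exacts [norm_adjointA_map_le_opnA_mul hBA hT _,
          norm_adjointA_map_le_opnA_mul hBA hS _]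
    _ = _ := by ring

lemma norm_sq_add_norm_sq_le (hBA : star B * B = A) (hT : A * Ts = star T * A)
    (hS : A * Ss = star S * A) {x : H} (hx : ‖B x‖ = 1) :
    ‖B (T x)‖ ^ 2 + ‖B (S x)‖ ^ 2 ≤ 1 / 2 * (opnA A T ^ 2 + opnA A S ^ 2 +
      √((opnA A T ^ 2 - opnA A S ^ 2) ^ 2 + 4 * opnA A (T ∘L Ss) ^ 2)) := by
  set t := ‖B (T x)‖ ^ 2 + ‖B (S x)‖ ^ 2
  set N := ‖B (Ts (T x) + Ss (S x))‖
  set l := 1 / 2 * (opnA A T ^ 2 + opnA A S ^ 2 +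
      √((opnA A T ^ 2 - opnA A S ^ 2) ^ 2 + 4 * opnA A (T ∘L Ss) ^ 2))
  have htN : t ≤ N :=
    calc t = re ⟪B x, B (Ts (T x) + Ss (S x))⟫_ℂ := by
          rw [map_add, inner_add_right, map_add,
            ← inner_map_eq_inner_of_mul_eq_star_mul hBA (mul_eq_star_mul_symm hBA hT),
            ← inner_map_eq_inner_of_mul_eq_star_mul hBA (mul_eq_star_mul_symm hBA hS),
            inner_self_eq_norm_sq, inner_self_eq_norm_sq]
      _ ≤ ‖B x‖ * N := (re_le_norm _).trans (norm_inner_le_norm _ _)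
      _ = N := by rw [hx, one_mul]
  have hNt : N ^ 2 ≤ l * t := (norm_map_add_map_sq_le hBA hT hS x).trans
    (quadratic_form_le_max_eigenvalue _ _ _ _ _)
  have hl : 0 ≤ l := by positivity
  have ht : 0 ≤ t := by positivity
  nlinarith [mul_le_mul htN htN ht (ht.trans htN)]

lemma opnA_add_le (hBA : star B * B = A) (hT : A * Ts = star T * A) (hS : A * Ss = star S * A) :
    opnA A (T + S) ≤ √(1 / 2 * (opnA A T ^ 2 + opnA A S ^ 2 +
      √((opnA A T ^ 2 - opnA A S ^ 2) ^ 2 + 4 * opnA A (T ∘L Ss) ^ 2)) + 2 * wA A (Ss ∘L T)) := by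
  have hSsT : A * (Ts * S) = star (Ss * T) * A :=
    mul_mul_eq_star_mul_mul (mul_eq_star_mul_symm hBA hS) hT
  refine opnA_le hBA (Real.sqrt_nonneg _) fun x hx => Real.le_sqrt_of_sq_le ?_
  have hcross : re ⟪B (T x), B (S x)⟫_ℂ ≤ wA A (Ss ∘L T) :=
    calc re ⟪B (T x), B (S x)⟫_ℂ = re ⟪A ((Ss ∘L T) x), x⟫_ℂ := by
          rw [inner_apply_eq_inner_of_star_mul_self_eq hBA, comp_apply,
            inner_map_eq_inner_of_mul_eq_star_mul hBA hS]
      _ ≤ ‖⟪A ((Ss ∘L T) x), x⟫_ℂ‖ := re_le_norm _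
      _ ≤ wA A (Ss ∘L T) := norm_inner_le_wA hBA hSsT hx
  calc ‖B ((T + S) x)‖ ^ 2
      = ‖B (T x)‖ ^ 2 + ‖B (S x)‖ ^ 2 + 2 * re ⟪B (T x), B (S x)⟫_ℂ := by
        rw [add_apply, map_add, norm_add_sq (𝕜 := ℂ)]; ring
    _ ≤ _ := add_le_add (norm_sq_add_norm_sq_le hBA hT hS hx) (by linarith)

end Sum

theorem stmt9_general (A T S Ts Ss : H →L[ℂ] H) (hA : A.IsPositive)
    (hTs : IsReducedAdjA A T Ts) (hSs : IsReducedAdjA A S Ss) :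
    opnA A (T + S) ≤ Real.sqrt ((1/2) * ((opnA A T)^2 + (opnA A S)^2 + Real.sqrt (((opnA A T)^2 - (opnA A S)^2)^2 + 4 * (opnA A (T ∘L Ss))^2)) + 2 * wA A (Ss ∘L T)) ∧
    Real.sqrt ((1/2) * ((opnA A T)^2 + (opnA A S)^2 + Real.sqrt (((opnA A T)^2 - (opnA A S)^2)^2 + 4 * (opnA A (T ∘L Ss))^2)) + 2 * wA A (Ss ∘L T)) ≤ opnA A T + opnA A S := by
  obtain ⟨B, hBA⟩ := exists_star_mul_self_eq_of_isPositive hA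
  have hT : A * Ts = star T * A := hTs.1
  have hS : A * Ss = star S * A := hSs.1
  have hS' : A * S = star Ss * A := mul_eq_star_mul_symm hBA hS
  have hSs_le : opnA A Ss ≤ opnA A S := opnA_adjointA_le hBA hS
  refine ⟨opnA_add_le hBA hT hS, sqrt_half_add_le_add opnA_nonneg opnA_nonneg opnA_nonneg ?_ ?_⟩
  · calc opnA A (T ∘L Ss) ≤ opnA A T * opnA A Ss := opnA_comp_le hBA hT hS'
      _ ≤ opnA A T * opnA A S := by gcongr; exact opnA_nonneg
  · calc wA A (Ss ∘L T) ≤ opnA A (Ss ∘L T) :=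
          wA_le_opnA hBA (mul_mul_eq_star_mul_mul hS' hT)
      _ ≤ opnA A Ss * opnA A T := opnA_comp_le hBA hS' hT
      _ ≤ opnA A T * opnA A S := by rw [mul_comm]; gcongr; exact opnA_nonneg

theorem stmt9 (A T S Ts Ss : H →L[ℂ] H) (hA : A.IsPositive) (hA0 : A ≠ 0)
    (hTs : IsReducedAdjA A T Ts) (hSs : IsReducedAdjA A S Ss) :
    opnA A (T + S) ≤ Real.sqrt ((1/2) * ((opnA A T)^2 + (opnA A S)^2 + Real.sqrt (((opnA A T)^2 - (opnA A S)^2)^2 + 4 * (opnA A (T ∘L Ss))^2)) + 2 * wA A (Ss ∘L T)) ∧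
    Real.sqrt ((1/2) * ((opnA A T)^2 + (opnA A S)^2 + Real.sqrt (((opnA A T)^2 - (opnA A S)^2)^2 + 4 * (opnA A (T ∘L Ss))^2)) + 2 * wA A (Ss ∘L T)) ≤ opnA A T + opnA A S :=
  stmt9_general A T S Ts Ss hA hTs hSs
end

section
/- Let T and S be bounded linear operators on H admitting reduced A-adjoints T^♯ and S^♯. Then ‖TS^♯‖_A = ‖ST^♯‖_A. -/
open ContinuousLinearMap

variable {H : Type*} [NormedAddCommGroup H] [InnerProductSpace ℂ H] [CompleteSpace H]

/-! The reduced adjoints make `T S♯` and `S T♯` mutually `A`-adjoint: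
`⟨T S♯ x, y⟩_A = conj ⟨S T♯ y, x⟩_A`. Writing `‖x‖_A = ‖A^{1/2} x‖`, the semi-inner product
satisfies Cauchy–Schwarz and `‖z‖_A` is attained as `|⟨z, y⟩_A|` at `y = z / ‖z‖_A`, so
each of `‖T S♯ x‖_A`, `‖S T♯ y‖_A` is bounded by a value of the other; the two suprema agree. -/

open ComplexConjugate

section Seminorm

variable {A : H →L[ℂ] H}

lemma inner_apply_eq_inner_sqrt_apply (hA : A.IsPositive) (u v : H) :
    inner ℂ (A u) v = inner ℂ (CFC.sqrt A u) (CFC.sqrt A v) := by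
  have hR : (CFC.sqrt A).IsPositive := (nonneg_iff_isPositive _).1 (CFC.sqrt_nonneg A)
  rw [← hR.inner_left_eq_inner_right, ← mul_apply_eq_comp,
    CFC.sqrt_mul_sqrt_self A ((nonneg_iff_isPositive A).2 hA)]

lemma vnA_eq_norm_sqrt_apply (hA : A.IsPositive) (x : H) : vnA A x = ‖CFC.sqrt A x‖ := by
  rw [vnA, inner_apply_eq_inner_sqrt_apply hA, inner_self_eq_norm_sq (𝕜 := ℂ),
    Real.sqrt_sq (norm_nonneg _)]

lemma norm_inner_apply_le_vnA_mul_vnA (hA : A.IsPositive) (u v : H) :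
    ‖inner ℂ (A u) v‖ ≤ vnA A u * vnA A v := by
  rw [inner_apply_eq_inner_sqrt_apply hA, vnA_eq_norm_sqrt_apply hA, vnA_eq_norm_sqrt_apply hA]
  exact norm_inner_le_norm _ _

lemma exists_vnA_eq_one_norm_inner_apply_eq (hA : A.IsPositive) {z : H} (hz : vnA A z ≠ 0) :
    ∃ y, vnA A y = 1 ∧ ‖inner ℂ (A z) y‖ = vnA A z := by
  have hc : 0 < vnA A z := (vnA_eq_norm_sqrt_apply hA z ▸ norm_nonneg _).lt_of_ne' hz
  refine ⟨((vnA A z : ℝ) : ℂ)⁻¹ • z, ?_, ?_⟩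
  · rw [vnA_eq_norm_sqrt_apply hA, map_smul, norm_smul, ← vnA_eq_norm_sqrt_apply hA]
    simp [abs_of_pos hc, hc.ne']
  · rw [inner_smul_right, norm_mul, inner_apply_eq_inner_sqrt_apply hA, inner_self_eq_norm_sq_to_K,
      ← vnA_eq_norm_sqrt_apply hA]
    simp only [norm_inv, Complex.norm_real, Real.norm_eq_abs, abs_of_pos hc, Complex.coe_algebraMap,
      norm_pow]
    field_simp

variable {X Y : H →L[ℂ] H}

lemma exists_vnA_eq_one_vnA_apply_le (hA : A.IsPositive)
    (hXY : ∀ u v, inner ℂ (A (X u)) v = conj (inner ℂ (A (Y v)) u)) {x : H} (hx : vnA A x = 1) :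
    ∃ y, vnA A y = 1 ∧ vnA A (X x) ≤ vnA A (Y y) := by
  by_cases hXx : vnA A (X x) = 0
  · exact ⟨x, hx, hXx ▸ Real.sqrt_nonneg _⟩
  obtain ⟨y, hy, hXxy⟩ := exists_vnA_eq_one_norm_inner_apply_eq hA hXx
  refine ⟨y, hy, ?_⟩
  calc vnA A (X x) = ‖inner ℂ (A (X x)) y‖ := hXxy.symm
    _ = ‖inner ℂ (A (Y y)) x‖ := by rw [hXY, RCLike.norm_conj]
    _ ≤ vnA A (Y y) * vnA A x := norm_inner_apply_le_vnA_mul_vnA hA _ _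
    _ = vnA A (Y y) := by rw [hx, mul_one]

lemma opnA_eq_of_inner_apply_eq_conj (hA : A.IsPositive)
    (hXY : ∀ u v, inner ℂ (A (X u)) v = conj (inner ℂ (A (Y v)) u)) :
    opnA A X = opnA A Y := by
  have hYX : ∀ u v, inner ℂ (A (Y u)) v = conj (inner ℂ (A (X v)) u) := fun u v => by
    rw [hXY, RCLike.conj_conj]
  refine csSup_eq_csSup_of_forall_exists_le ?_ ?_ <;> rintro _ ⟨x, hx, rfl⟩
  · obtain ⟨y, hy, hle⟩ := exists_vnA_eq_one_vnA_apply_le hA hXY hx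
    exact ⟨_, ⟨y, hy, rfl⟩, hle⟩
  · obtain ⟨y, hy, hle⟩ := exists_vnA_eq_one_vnA_apply_le hA hYX hx
    exact ⟨_, ⟨y, hy, rfl⟩, hle⟩

end Seminorm

namespace IsReducedAdjA

variable {A T Ts : H →L[ℂ] H}

lemma inner_apply_left (hTs : IsReducedAdjA A T Ts) (u v : H) :
    inner ℂ (A (Ts u)) v = inner ℂ (A u) (T v) := by
  rw [← comp_apply, hTs.1, comp_apply, adjoint_inner_left]

lemma inner_apply_right (hA : IsSelfAdjoint A) (hTs : IsReducedAdjA A T Ts) (u v : H) :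
    inner ℂ (A (T u)) v = inner ℂ (A u) (Ts v) := by
  rw [hA.isSymmetric.apply_clm, ← adjoint_inner_right, ← comp_apply, ← hTs.1, comp_apply,
    hA.isSymmetric.apply_clm]

lemma inner_comp_apply_eq_conj {S Ss : H →L[ℂ] H} (hA : IsSelfAdjoint A)
    (hTs : IsReducedAdjA A T Ts) (hSs : IsReducedAdjA A S Ss) (u v : H) :
    inner ℂ (A ((T ∘L Ss) u)) v = conj (inner ℂ (A ((S ∘L Ts) v)) u) := by
  rw [comp_apply, comp_apply, hTs.inner_apply_right hA, hSs.inner_apply_left,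
    hA.isSymmetric.apply_clm, inner_conj_symm]

end IsReducedAdjA

theorem stmt16_general (A T S Ts Ss : H →L[ℂ] H) (hA : A.IsPositive)
    (hTs : IsReducedAdjA A T Ts) (hSs : IsReducedAdjA A S Ss) :
    opnA A (T ∘L Ss) = opnA A (S ∘L Ts) :=
  opnA_eq_of_inner_apply_eq_conj hA (hTs.inner_comp_apply_eq_conj hA.isSelfAdjoint hSs)

theorem stmt16 (A T S Ts Ss : H →L[ℂ] H) (hA : A.IsPositive) (hA0 : A ≠ 0)
    (hTs : IsReducedAdjA A T Ts) (hSs : IsReducedAdjA A S Ss) :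
    opnA A (T ∘L Ss) = opnA A (S ∘L Ts) :=
  stmt16_general A T S Ts Ss hA hTs hSs
end
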